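/- Let N ≥ 1, let a, b : Fin N → ℝ satisfy a i > 0 and b i > 0 for all i, let Σ be an N×N real symmetric positive semidefinite matrix, and set D i j = Σ i i + Σ j j − 2·Σ i j and α i j = (a i + a j)/2. Let F be a finite Borel measure on (0,∞). Then the N×N matrix K with entries K i j = ∫₀^∞ √(b i · b j) / √(α i j + D i j · w) dF(w) is positive semidefinite, i.e. ∑_{i,j} r i · r j · K i j ≥ 0 for every vector r : Fin N → ℝ. -/

import Mathlib

/-!
The kernel `1/√((a i + a j)/2 + D i j)`, with `D = S.variogram` the resistance metric, is a
Gaussian mixture: `c^(-1/2) = π^(-1/2) ∫ exp (-c x²) dx`, and for this `c` the integrand factors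
as `u i * u j * exp (2 x² S i j)` with `u i = exp (-(a i / 2 + S i i) x²)`. The entrywise
exponential of a positive semidefinite matrix is positive semidefinite (Schur product theorem,
applied to the Hadamard powers in the exponential series), so every integrand is, and hence so is
the kernel. Replacing `S` by `w • S`, multiplying by `√(b i) √(b j)` and integrating against `F`
in `w` all preserve positive semidefiniteness.
-/

open MeasureTheory Real Set

theorem inv_sqrt_eq_integral_exp_neg_mul_sq {c : ℝ} (hc : 0 < c) :
    (√c)⁻¹ = (√π)⁻¹ * ∫ x : ℝ, exp (-c * x ^ 2) := by
  rw [integral_gaussian, sqrt_div pi_pos.le]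
  field_simp

theorem integrableOn_Ioi_div_sqrt_add_mul {μ : Measure ℝ} [IsFiniteMeasure μ] {α d : ℝ}
    (hα : 0 < α) (hd : 0 ≤ d) (c : ℝ) :
    IntegrableOn (fun w => c / √(α + d * w)) (Ioi 0) μ := by
  refine Integrable.of_bound (by fun_prop : Measurable _).aestronglyMeasurable (|c| / √α)
    (ae_restrict_of_forall_mem measurableSet_Ioi fun w (hw : 0 < w) => ?_)
  rw [norm_div, norm_of_nonneg (sqrt_nonneg _), norm_eq_abs]
  gcongr
  exact le_add_of_nonneg_right (mul_nonneg hd hw.le)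

namespace Matrix

variable {ι : Type*} [Fintype ι]

def variogram (S : Matrix ι ι ℝ) : Matrix ι ι ℝ :=
  of fun i j => S i i + S j j - 2 * S i j

theorem posSemidef_iff_isHermitian_and_sum_nonneg {M : Matrix ι ι ℝ} :
    M.PosSemidef ↔ M.IsHermitian ∧ ∀ r : ι → ℝ, 0 ≤ ∑ i, ∑ j, r i * r j * M i j := by
  rw [posSemidef_iff_dotProduct_mulVec]
  refine and_congr_right fun _ => forall_congr' fun r => ?_
  simp only [star_trivial, dotProduct, mulVec, Finset.mul_sum, mul_assoc, mul_comm (M _ _) (r _)]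

omit [Fintype ι] in
theorem PosSemidef.variogram_nonneg {S : Matrix ι ι ℝ} (hS : S.PosSemidef) (i j : ι) :
    0 ≤ S.variogram i j := by
  have hsymm : S j i = S i j := by simpa using hS.isHermitian.apply i j
  have := (posSemidef_iff_isHermitian_and_sum_nonneg.mp (hS.submatrix ![i, j])).2 ![1, -1]
  simp only [submatrix_apply, Fin.sum_univ_two, cons_val_zero, cons_val_one, cons_val_fin_one,
    mul_one, one_mul, mul_neg, neg_mul, neg_neg] at this
  simp only [variogram, of_apply]
  linarith

open scoped ComplexOrder in
theorem PosSemidef.map_pow {𝕜 : Type*} [RCLike 𝕜] {S : Matrix ι ι 𝕜} (hS : S.PosSemidef)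
    (n : ℕ) : (S.map (· ^ n)).PosSemidef := by
  induction n with
  | zero => simpa [vecMulVec, Matrix.map] using posSemidef_vecMulVec_self_star (1 : ι → 𝕜)
  | succ n ih =>
    convert ih.hadamard hS using 1
    ext i j
    simp [pow_succ]

theorem PosSemidef.map_exp {S : Matrix ι ι ℝ} (hS : S.PosSemidef) :
    (S.map exp).PosSemidef := by
  refine posSemidef_iff_isHermitian_and_sum_nonneg.mpr
    ⟨hS.isHermitian.map _ fun _ => rfl, fun r => ?_⟩
  have hseries : HasSum (fun n : ℕ => (∑ i, ∑ j, r i * r j * S i j ^ n) / n.factorial)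
      (∑ i, ∑ j, r i * r j * exp (S i j)) := by
    simp only [Finset.sum_div, mul_div_assoc]
    refine hasSum_sum fun i _ => hasSum_sum fun j _ => HasSum.mul_left _ ?_
    rw [exp_eq_exp_ℝ]
    exact NormedSpace.expSeries_div_hasSum_exp _
  refine hseries.nonneg fun n => div_nonneg ?_ (Nat.cast_nonneg _)
  simpa using (posSemidef_iff_isHermitian_and_sum_nonneg.mp (hS.map_pow n)).2 r

theorem posSemidef_of_integral {X : Type*} [MeasurableSpace X] {μ : Measure X}
    {M : X → Matrix ι ι ℝ} (hint : ∀ i j, Integrable (fun x => M x i j) μ)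
    (hM : ∀ᵐ x ∂μ, (M x).PosSemidef) :
    (of fun i j => ∫ x, M x i j ∂μ).PosSemidef := by
  refine posSemidef_iff_isHermitian_and_sum_nonneg.mpr ⟨?_, fun r => ?_⟩
  · ext i j
    simpa using integral_congr_ae (hM.mono fun x hx => by simpa using hx.isHermitian.apply i j)
  · have hswap : ∑ i, ∑ j, r i * r j * ∫ x, M x i j ∂μ
        = ∫ x, ∑ i, ∑ j, r i * r j * M x i j ∂μ := by
      rw [integral_finsetSum _ fun i _ => integrable_finsetSum _ fun j _ => (hint i j).const_mul _]
      refine Finset.sum_congr rfl fun i _ => ?_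
      rw [integral_finsetSum _ fun j _ => (hint i j).const_mul _]
      simp only [integral_const_mul]
    simpa [hswap] using integral_nonneg_of_ae (hM.mono fun x hx =>
      (posSemidef_iff_isHermitian_and_sum_nonneg.mp hx).2 r)

theorem PosSemidef.inv_sqrt_mean_add_variogram {S : Matrix ι ι ℝ} (hS : S.PosSemidef)
    {a : ι → ℝ} (ha : ∀ i, 0 < a i) :
    (of fun i j => (√((a i + a j) / 2 + S.variogram i j))⁻¹).PosSemidef := by
  have hc : ∀ i j, 0 < (a i + a j) / 2 + S.variogram i j := fun i j => by
    linarith [ha i, ha j, hS.variogram_nonneg i j]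
  let u : ℝ → ι → ℝ := fun x i => exp (-(a i / 2 + S i i) * x ^ 2)
  let M : ℝ → Matrix ι ι ℝ := fun x => vecMulVec (u x) (u x) ⊙ ((2 * x ^ 2) • S).map exp
  have hM : ∀ x i j, M x i j = exp (-((a i + a j) / 2 + S.variogram i j) * x ^ 2) := by
    intro x i j
    simp only [M, u, variogram, hadamard_apply, vecMulVec_apply, map_apply, smul_apply,
      smul_eq_mul, of_apply, ← exp_add]
    ring_nf
  have hkernel : (of fun i j => (√((a i + a j) / 2 + S.variogram i j))⁻¹)
      = (√π)⁻¹ • of fun i j => ∫ x, M x i j := by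
    ext i j
    simp only [hM, of_apply, smul_apply, smul_eq_mul, inv_sqrt_eq_integral_exp_neg_mul_sq (hc i j)]
  rw [hkernel]
  refine (posSemidef_of_integral (fun i j => ?_) (ae_of_all _ fun x => ?_)).smul (by positivity)
  · simpa only [hM] using integrable_exp_neg_mul_sq (hc i j)
  · simpa using (posSemidef_vecMulVec_self_star (u x)).hadamard
      (hS.smul (by positivity : 0 ≤ 2 * x ^ 2)).map_exp

theorem PosSemidef.sqrt_mul_div_sqrt_mean_add_variogram_mul {S : Matrix ι ι ℝ}
    (hS : S.PosSemidef) {a b : ι → ℝ} (ha : ∀ i, 0 < a i) (hb : ∀ i, 0 ≤ b i) {w : ℝ}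
    (hw : 0 ≤ w) :
    (of fun i j => √(b i * b j) / √((a i + a j) / 2 + S.variogram i j * w)).PosSemidef := by
  have hfactor : (of fun i j => √(b i * b j) / √((a i + a j) / 2 + S.variogram i j * w))
      = vecMulVec (fun i => √(b i)) (fun i => √(b i)) ⊙
          of fun i j => (√((a i + a j) / 2 + (w • S).variogram i j))⁻¹ := by
    ext i j
    simp only [variogram, of_apply, hadamard_apply, vecMulVec_apply, smul_apply, smul_eq_mul,
      sqrt_mul (hb i), div_eq_mul_inv]
    ring_nf
  rw [hfactor]
  simpa using (posSemidef_vecMulVec_self_star fun i => √(b i)).hadamard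
    ((hS.smul hw).inv_sqrt_mean_add_variogram ha)

end Matrix

theorem stmt0_general (N : ℕ) (a b : Fin N → ℝ)
    (ha : ∀ i, 0 < a i) (hb : ∀ i, 0 < b i)
    (S : Matrix (Fin N) (Fin N) ℝ) (hS : S.PosSemidef)
    (F : Measure ℝ) [IsFiniteMeasure F]
    (K : Matrix (Fin N) (Fin N) ℝ)
    (hK : ∀ i j, K i j =
      ∫ w in Set.Ioi (0 : ℝ),
        Real.sqrt (b i * b j) /
          Real.sqrt ((a i + a j) / 2 + (S i i + S j j - 2 * S i j) * w) ∂F) :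
    ∀ r : Fin N → ℝ, 0 ≤ ∑ i, ∑ j, r i * r j * K i j := by
  have hKpsd : K.PosSemidef := by
    have hK' : K = Matrix.of fun i j => ∫ w in Ioi 0,
        √(b i * b j) / √((a i + a j) / 2 + S.variogram i j * w) ∂F := Matrix.ext hK
    rw [hK']
    refine Matrix.posSemidef_of_integral (fun i j => ?_) ?_
    · exact integrableOn_Ioi_div_sqrt_add_mul (by linarith [ha i, ha j])
        (hS.variogram_nonneg i j) _
    · exact ae_restrict_of_forall_mem measurableSet_Ioi fun w (hw : 0 < w) =>
        hS.sqrt_mul_div_sqrt_mean_add_variogram_mul ha (fun i => (hb i).le) hw.le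
  exact (Matrix.posSemidef_iff_isHermitian_and_sum_nonneg.mp hKpsd).2

/-- Finite-dimensional form of Theorem 1: the non-stationary covariance matrix built from
positive functions `a`, `b`, a positive semidefinite matrix `S` (covariance of the auxiliary
Gaussian field, inducing the resistance distances `D i j = S i i + S j j - 2 S i j`) and a
finite Borel measure `F` on `(0, ∞)` is positive semidefinite. -/
theorem stmt0 (N : ℕ) (hN : 1 ≤ N) (a b : Fin N → ℝ)
    (ha : ∀ i, 0 < a i) (hb : ∀ i, 0 < b i)
    (S : Matrix (Fin N) (Fin N) ℝ) (hS : S.PosSemidef)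
    (F : Measure ℝ) [IsFiniteMeasure F]
    (K : Matrix (Fin N) (Fin N) ℝ)
    (hK : ∀ i j, K i j =
      ∫ w in Set.Ioi (0 : ℝ),
        Real.sqrt (b i * b j) /
          Real.sqrt ((a i + a j) / 2 + (S i i + S j j - 2 * S i j) * w) ∂F) :
    ∀ r : Fin N → ℝ, 0 ≤ ∑ i, ∑ j, r i * r j * K i j :=
  stmt0_general N a b ha hb S hS F K hK
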